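/- arXiv:1106.5986 — 5 statements merged into one kernel-verified Lean document; each statement's English description precedes it below -/
import Mathlib

section
/- Let θ ∈ ℝ with 2Re(T) + 3 ≠ 0 and cosθ ≠ 1, where T = 2cos²θ + 2cosθ - 1 + 2i sinθ(1 - cosθ). Then cosθ = ((|T|² - 5)/4 + 2Re(T) + 2)/(2Re(T) + 3) and i sinθ = i·Im(T)/(2(1 - cosθ)). In particular, e^{iθ} lies in the field ℚ(T, conj(T)). -/
/-!
With `c = cos θ` and `s = sin θ` we have `Re T = 2c² + 2c - 1` and `Im T = 2s(1 - c)`. Using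
`s² = 1 - c²`, the quantity `(|T|² - 5)/4 + 2 Re T + 2` equals `c (2c + 1)² = c (2 Re T + 3)`, which
recovers `c`; then `i s = i Im T / (2(1 - c))`. Since `Re T`, `i Im T` and `|T|²` are
`(T + T̄)/2`, `(T - T̄)/2` and `T T̄`, the eigenvalue `e^{iθ} = c + i s` is rational in `T` and `T̄`.
-/

open Complex ComplexConjugate

namespace Complex

variable {K : Subfield ℂ} {z : ℂ}

theorem ofReal_re_mem_of_conj_mem (hz : z ∈ K) (hz' : conj z ∈ K) : (z.re : ℂ) ∈ K := by
  rw [re_eq_add_conj]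
  exact K.div_mem (K.add_mem hz hz') (ofNat_mem K 2)

theorem I_mul_ofReal_im_mem_of_conj_mem (hz : z ∈ K) (hz' : conj z ∈ K) : I * z.im ∈ K := by
  have : I * z.im = (z - conj z) / 2 := by
    rw [sub_conj]
    push_cast
    ring
  rw [this]
  exact K.div_mem (K.sub_mem hz hz') (ofNat_mem K 2)

theorem ofReal_norm_sq_mem_of_conj_mem (hz : z ∈ K) (hz' : conj z ∈ K) : (‖z‖ : ℂ) ^ 2 ∈ K := by
  rw [← ofReal_pow, ← normSq_eq_norm_sq, ← mul_conj]
  exact K.mul_mem hz hz'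

end Complex

theorem cos_eq_of_trace_re_im {c s x y : ℝ} (hcs : s ^ 2 + c ^ 2 = 1)
    (hx : x = 2 * c ^ 2 + 2 * c - 1) (hy : y = 2 * s * (1 - c)) (h : 2 * x + 3 ≠ 0) :
    c = ((x ^ 2 + y ^ 2 - 5) / 4 + 2 * x + 2) / (2 * x + 3) := by
  rw [eq_div_iff h, hx, hy]
  linear_combination (-(1 - c) ^ 2) * hcs

theorem eigenvalue_in_trace_field (θ : ℝ)
    (T : ℂ)
    (hT : T = 2 * (Real.cos θ : ℂ)^2 + 2 * Real.cos θ - 1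
      + 2 * I * Real.sin θ * (1 - Real.cos θ))
    (h1 : 2 * T.re + 3 ≠ 0) (h2 : Real.cos θ ≠ 1) :
    Real.cos θ = ((‖T‖ ^ 2 - 5)/4 + 2 * T.re + 2) / (2 * T.re + 3)
    ∧ I * Real.sin θ = I * T.im / (2 * (1 - (Real.cos θ : ℂ)))
    ∧ Complex.exp (θ * I) ∈ Subfield.closure {T, (starRingEnd ℂ) T} := by
  have hre : T.re = 2 * Real.cos θ ^ 2 + 2 * Real.cos θ - 1 := by
    simp [hT, sq, cos_ofReal_re]
  have him : T.im = 2 * Real.sin θ * (1 - Real.cos θ) := by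
    simp [hT, sq, cos_ofReal_re, sin_ofReal_re]
  have hcos : Real.cos θ = ((‖T‖ ^ 2 - 5) / 4 + 2 * T.re + 2) / (2 * T.re + 3) := by
    rw [← normSq_eq_norm_sq, normSq_apply, ← sq, ← sq]
    exact cos_eq_of_trace_re_im (Real.sin_sq_add_cos_sq θ) hre him h1
  have hsin : I * Real.sin θ = I * T.im / (2 * (1 - (Real.cos θ : ℂ))) := by
    have hc : 1 - (Real.cos θ : ℂ) ≠ 0 := by exact_mod_cast sub_ne_zero.2 h2.symm
    rw [him, eq_div_iff (mul_ne_zero two_ne_zero hc)]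
    push_cast
    ring
  refine ⟨hcos, hsin, ?_⟩
  set K := Subfield.closure {T, conj T}
  have hTK : T ∈ K := Subfield.subset_closure (by simp)
  have hTK' : conj T ∈ K := Subfield.subset_closure (by simp)
  have hcosK : (Real.cos θ : ℂ) ∈ K := by
    have hreK := ofReal_re_mem_of_conj_mem hTK hTK'
    have hnormK := ofReal_norm_sq_mem_of_conj_mem hTK hTK'
    rw [hcos]
    push_cast
    exact K.div_mem
      (K.add_mem (K.add_mem (K.div_mem (K.sub_mem hnormK (ofNat_mem K 5)) (ofNat_mem K 4))
        (K.mul_mem (ofNat_mem K 2) hreK)) (ofNat_mem K 2))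
      (K.add_mem (K.mul_mem (ofNat_mem K 2) hreK) (ofNat_mem K 3))
  rw [exp_mul_I, ← ofReal_cos, ← ofReal_sin, mul_comm _ I, hsin]
  exact K.add_mem hcosK (K.div_mem (I_mul_ofReal_im_mem_of_conj_mem hTK hTK')
    (K.mul_mem (ofNat_mem K 2) (K.sub_mem K.one_mem hcosK)))
end

section
/- In SU(1,1) with H = diag(-√15, 1) over E = ℚ(√15, i), the matrix g = √(4+√15)·[[2,1],[√15,2]] satisfies g*Hg = H, det(g) = 1, and g² has entries in the ring of integers of E, yet Tr(g) = 4√(4+√15) ∉ E. -/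
open Matrix Complex

noncomputable def Hmat : Matrix (Fin 2) (Fin 2) ℂ :=
  !![-(Real.sqrt 15 : ℂ), 0; 0, 1]

noncomputable def gmat : Matrix (Fin 2) (Fin 2) ℂ :=
  (Real.sqrt (4 + Real.sqrt 15) : ℂ) • !![2, 1; (Real.sqrt 15 : ℂ), 2]

/-- The field E = ℚ(√15, i) as a subfield of ℂ. -/
noncomputable def Efield : Subfield ℂ :=
  Subfield.closure {(Real.sqrt 15 : ℂ), Complex.I}

/-! For `s = √15` and `t = √(4 + √15)` the matrix identities only use `s² = 15`, `t² = 4 + s`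
and that `s`, `t` are real, so they hold over any commutative star ring.

For `t ∉ E`: the real part of every element of `E = ℚ(√15)(i)` lies in `ℚ(√15)`, the image of the
field `QuadraticAlgebra ℚ 15 0`. So `t ∈ E` would make `4 + √15` a square `(a + b√15)²` there,
i.e. `a² + 15b² = 4` and `2ab = 1`, whence `(2a² - 3)(2a² - 5) = 0`; but neither 6 nor 10 is the
square of a rational. -/

section

variable {R : Type*} [CommRing R]

def gmatOf (s t : R) : Matrix (Fin 2) (Fin 2) R :=
  t • !![2, 1; s, 2]

def HmatOf (s : R) : Matrix (Fin 2) (Fin 2) R :=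
  !![-s, 0; 0, 1]

lemma trace_gmatOf (s t : R) : (gmatOf s t).trace = 4 * t := by
  simp only [gmatOf, trace_smul, trace_fin_two_of, smul_eq_mul]
  ring

variable {s t : R}

lemma det_gmatOf (hs : s ^ 2 = 15) (ht : t ^ 2 = 4 + s) : (gmatOf s t).det = 1 := by
  rw [gmatOf, det_smul, det_fin_two_of, Fintype.card_fin]
  linear_combination (4 - s) * ht - hs

lemma gmatOf_mul_self (hs : s ^ 2 = 15) (ht : t ^ 2 = 4 + s) :
    gmatOf s t * gmatOf s t = !![31 + 8 * s, 16 + 4 * s; 60 + 16 * s, 31 + 8 * s] := by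
  rw [gmatOf, smul_mul_smul_comm, mul_fin_two, ← sq, ht, smul_of]
  ext i j
  fin_cases i <;> fin_cases j <;> simp
  · linear_combination hs
  · ring
  · linear_combination 4 * hs
  · linear_combination hs

lemma gmatOf_mul_self_mem {S : Type*} [SetLike S R] [SubringClass S R] {A : S} (hsA : s ∈ A)
    (hs : s ^ 2 = 15) (ht : t ^ 2 = 4 + s) (i j : Fin 2) : (gmatOf s t * gmatOf s t) i j ∈ A := by
  rw [gmatOf_mul_self hs ht]
  fin_cases i <;> fin_cases j <;> simp [add_mem, mul_mem, hsA]

lemma conjTranspose_gmatOf_mul_HmatOf_mul_gmatOf [StarRing R] (hsa : IsSelfAdjoint s)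
    (hta : IsSelfAdjoint t) (hs : s ^ 2 = 15) (ht : t ^ 2 = 4 + s) :
    (gmatOf s t)ᴴ * HmatOf s * gmatOf s t = HmatOf s := by
  have hM : (!![2, 1; s, 2] : Matrix (Fin 2) (Fin 2) R)ᴴ = !![2, s; 1, 2] := by
    ext i j
    fin_cases i <;> fin_cases j <;> simp [hsa.star_eq]
  rw [gmatOf, HmatOf, conjTranspose_smul, hta.star_eq, hM, Matrix.smul_mul, Matrix.smul_mul,
    Matrix.mul_smul, smul_smul, ← sq, ht, mul_fin_two, mul_fin_two, smul_of]
  ext i j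
  fin_cases i <;> fin_cases j <;> simp
  · linear_combination s * hs
  · ring
  · ring
  · linear_combination -hs

end

def Subfield.adjoinI (K : Subfield ℝ) : Subfield ℂ where
  carrier := {z | z.re ∈ K ∧ z.im ∈ K}
  zero_mem' := ⟨zero_mem K, zero_mem K⟩
  one_mem' := ⟨one_mem K, zero_mem K⟩
  add_mem' hz hw := ⟨add_mem hz.1 hw.1, add_mem hz.2 hw.2⟩
  neg_mem' hz := ⟨neg_mem hz.1, neg_mem hz.2⟩
  mul_mem' hz hw :=
    ⟨sub_mem (mul_mem hz.1 hw.1) (mul_mem hz.2 hw.2),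
      add_mem (mul_mem hz.1 hw.2) (mul_mem hz.2 hw.1)⟩
  inv_mem' z hz := by
    have hn : normSq z ∈ K := by
      rw [normSq_apply]
      exact add_mem (mul_mem hz.1 hz.1) (mul_mem hz.2 hz.2)
    simp only [Set.mem_ofPred_eq, inv_re, inv_im]
    exact ⟨div_mem hz.1 hn, div_mem (neg_mem hz.2) hn⟩

open QuadraticAlgebra

instance : Fact (∀ r : ℚ, r ^ 2 ≠ 15 + 0 * r) :=
  ⟨fun r hr => (by norm_num : ¬ IsSquare (15 : ℚ)) ⟨r, by linear_combination -hr⟩⟩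

noncomputable def sqrt15Embedding : QuadraticAlgebra ℚ 15 0 →+* ℝ :=
  (lift ⟨√15, by simp⟩ : QuadraticAlgebra ℚ 15 0 →ₐ[ℚ] ℝ)

@[simp]
lemma sqrt15Embedding_omega : sqrt15Embedding ω = √15 := by
  simp [sqrt15Embedding]

lemma four_add_omega_not_isSquare : ¬ IsSquare (4 + ω : QuadraticAlgebra ℚ 15 0) := by
  rintro ⟨z, hz⟩
  have hre := congrArg QuadraticAlgebra.re hz
  have him := congrArg QuadraticAlgebra.im hz
  simp only [re_add, QuadraticAlgebra.re_ofNat, omega_re, add_zero, re_mul, im_add,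
    QuadraticAlgebra.im_ofNat, omega_im, zero_add, im_mul, zero_mul] at hre him
  have : (2 * z.re ^ 2 - 3) * (2 * z.re ^ 2 - 5) = 0 := by
    linear_combination -4 * z.re ^ 2 * hre + 15 * (1 + 2 * z.re * z.im) * him
  rcases mul_eq_zero.1 this with h | h
  · exact (by norm_num : ¬ IsSquare (6 : ℚ)) ⟨2 * z.re, by linear_combination -2 * h⟩
  · exact (by norm_num : ¬ IsSquare (10 : ℚ)) ⟨2 * z.re, by linear_combination -2 * h⟩

lemma efield_le_adjoinI : Efield ≤ sqrt15Embedding.fieldRange.adjoinI := by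
  refine Subfield.closure_le.2 ?_
  rintro z (rfl | rfl)
  · exact ⟨⟨ω, by simp⟩, by simp [zero_mem]⟩
  · exact ⟨by simp [zero_mem], by simp [one_mem]⟩

lemma sqrt_four_add_sqrt15_not_mem_efield : ((√(4 + √15) : ℝ) : ℂ) ∉ Efield := by
  intro h
  obtain ⟨z, hz⟩ := (efield_le_adjoinI h).1
  refine four_add_omega_not_isSquare ⟨z, sqrt15Embedding.injective ?_⟩
  rw [ofReal_re] at hz
  rw [map_add, map_mul, hz, Real.mul_self_sqrt (by positivity), map_ofNat, sqrt15Embedding_omega]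

theorem arithmetic_trace_not_in_E :
    gmatᴴ * Hmat * gmat = Hmat
    ∧ gmat.det = 1
    ∧ (∀ i j, (gmat * gmat) i j ∈ Efield ∧ IsIntegral ℤ ((gmat * gmat) i j))
    ∧ gmat.trace = 4 * (Real.sqrt (4 + Real.sqrt 15) : ℂ)
    ∧ gmat.trace ∉ Efield := by
  have hs : ((√15 : ℝ) : ℂ) ^ 2 = 15 := by
    rw [← ofReal_pow, Real.sq_sqrt (by norm_num)]
    norm_num
  have ht : ((√(4 + √15) : ℝ) : ℂ) ^ 2 = 4 + (√15 : ℝ) := by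
    rw [← ofReal_pow, Real.sq_sqrt (by positivity)]
    norm_num
  have hsE : ((√15 : ℝ) : ℂ) ∈ Efield := Subfield.subset_closure (.inl rfl)
  have hsZ : ((√15 : ℝ) : ℂ) ∈ integralClosure ℤ ℂ :=
    IsIntegral.of_pow two_pos (by rw [hs]; exact_mod_cast isIntegral_natCast 15)
  have htrace := trace_gmatOf ((√15 : ℝ) : ℂ) ((√(4 + √15) : ℝ) : ℂ)
  rw [show gmat = gmatOf _ _ from rfl, show Hmat = HmatOf _ from rfl]
  refine ⟨conjTranspose_gmatOf_mul_HmatOf_mul_gmatOf (conj_ofReal _) (conj_ofReal _) hs ht,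
    det_gmatOf hs ht, fun i j => ⟨gmatOf_mul_self_mem hsE hs ht i j,
      gmatOf_mul_self_mem hsZ hs ht i j⟩, htrace, fun h => ?_⟩
  rw [htrace] at h
  exact sqrt_four_add_sqrt15_not_mem_efield
    (by simpa using mul_mem (inv_mem (ofNat_mem Efield 4)) h)
end

section
/- Let M ∈ SU(2,1) (for the Hermitian form z₁conj(w₃)+z₂conj(w₂)+z₃conj(w₁)) send ∞ to a boundary point with normalized lift p̃₀ = (w₀₁,w₀₂,1), send 0 to a point with lift p̃₁ = (w₁₁,w₁₂,1), and send (1,t) to a point with lift p̃₂ = (w₂₁,w₂₂,1). Let K be the field generated over ℚ by it and all wⱼₖ and their conjugates. Then all entries of M³ lie in K. -/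
open Matrix Complex

/-- The standard Hermitian form of signature (2,1) (Siegel model). -/
noncomputable def Jform : Matrix (Fin 3) (Fin 3) ℂ := !![0,0,1;0,1,0;1,0,0]

/-- Membership in SU(2,1). -/
def inSU21 (g : Matrix (Fin 3) (Fin 3) ℂ) : Prop :=
  gᴴ * Jform * g = Jform ∧ g.det = 1

/-!
Write `v = (μ, 1, 1)` with `μ = (-1 + it)/2`, so that `M e₁ = a₀ p₀`, `M e₃ = a₁ p₁`, `M v = a₂ p₂`.
Invariance of the Hermitian form `⟨z, w⟩ = z₁ w̄₃ + z₂ w̄₂ + z₃ w̄₁` under `M` gives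
`a₀ ā₁ ⟨p₀, p₁⟩ = 1`, `a₁ ā₀ ⟨p₁, p₀⟩ = 1`, `a₂ ā₀ ⟨p₂, p₀⟩ = 1` and `a₂ ā₁ ⟨p₂, p₁⟩ = μ`,
so `a₀ / a₂` and `a₁ / a₂` are quotients of Hermitian products of the `pⱼ`, hence lie in `K`.
Thus `M = a₂ N` with `N` over `K`, and `det M = 1` gives `a₂³ = (det N)⁻¹ ∈ K`.
-/

open ComplexConjugate

theorem Subring.det_mem_of_mem_matrix {n R : Type*} [Fintype n] [DecidableEq n] [CommRing R]
    (S : Subring R) {N : Matrix n n R} (hN : N ∈ S.matrix) : N.det ∈ S := by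
  rw [det_apply']
  exact S.sum_mem fun σ _ => S.mul_mem (intCast_mem S _) (S.prod_mem fun i _ => hN _ _)

theorem Matrix.mul_transpose_of {m n ι R : Type*} [Fintype n] [CommSemiring R]
    (M : Matrix m n R) (x : ι → n → R) : M * (of x)ᵀ = (of fun j => M *ᵥ x j)ᵀ := by
  ext i j
  simp [mul_apply, mulVec, dotProduct]

noncomputable def jInner (z w : Fin 3 → ℂ) : ℂ := star w ⬝ᵥ (Jform *ᵥ z)

theorem jInner_apply (z w : Fin 3 → ℂ) :
    jInner z w = z 0 * conj (w 2) + z 1 * conj (w 1) + z 2 * conj (w 0) := by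
  simp only [jInner, dotProduct, Pi.star_apply, RCLike.star_def, mulVec, Jform, of_apply, cons_val',
    cons_val_fin_one, Fin.sum_univ_three, cons_val_zero, cons_val_one, cons_val, zero_mul, add_zero,
    one_mul, zero_add]
  ring

theorem jInner_mulVec {g : Matrix (Fin 3) (Fin 3) ℂ} (hg : gᴴ * Jform * g = Jform)
    (z w : Fin 3 → ℂ) : jInner (g *ᵥ z) (g *ᵥ w) = jInner z w := by
  rw [jInner, star_mulVec, ← dotProduct_mulVec, mulVec_mulVec, mulVec_mulVec, hg, jInner]

theorem jInner_smul_smul (a b : ℂ) (z w : Fin 3 → ℂ) :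
    jInner (a • z) (b • w) = a * conj b * jInner z w := by
  simp only [jInner_apply, Pi.smul_apply, smul_eq_mul, map_mul]
  ring

theorem jInner_mem {K : Subfield ℂ} {z w : Fin 3 → ℂ} (hz : ∀ i, z i ∈ K)
    (hw : ∀ i, conj (w i) ∈ K) : jInner z w ∈ K := by
  rw [jInner_apply]
  exact add_mem (add_mem (mul_mem (hz 0) (hw 2)) (mul_mem (hz 1) (hw 1))) (mul_mem (hz 2) (hw 0))

theorem eq_mul_div_of_mul_eq_one_of_mul_eq {F : Type*} [Field F] {a b c d x y : F}
    (h₁ : a * b * x = 1) (h₂ : c * b * y = d) (hd : d ≠ 0) : a = c * (y / (d * x)) := by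
  have hb : b ≠ 0 := by rintro rfl; simp at h₁
  have hx : x ≠ 0 := by rintro rfl; simp at h₁
  rw [mul_div_assoc', eq_div_iff (mul_ne_zero hd hx)]
  apply mul_left_cancel₀ hb
  linear_combination d * h₁ - h₂

section Siegel

variable {M : Matrix (Fin 3) (Fin 3) ℂ} {μ a₀ a₁ a₂ : ℂ} {p₀ p₁ p₂ : Fin 3 → ℂ}

theorem coeffs_eq_of_mulVec_eq_smul (hM : Mᴴ * Jform * M = Jform) (hμ : μ ≠ 0)
    (h₀ : M *ᵥ ![1, 0, 0] = a₀ • p₀) (h₁ : M *ᵥ ![0, 0, 1] = a₁ • p₁)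
    (h₂ : M *ᵥ ![μ, 1, 1] = a₂ • p₂) :
    a₀ = a₂ * (jInner p₂ p₁ / (μ * jInner p₀ p₁)) ∧ a₁ = a₂ * (jInner p₂ p₀ / jInner p₁ p₀) := by
  have h₀₁ : a₀ * conj a₁ * jInner p₀ p₁ = 1 := by
    rw [← jInner_smul_smul, ← h₀, ← h₁, jInner_mulVec hM]; simp [jInner_apply]
  have h₁₀ : a₁ * conj a₀ * jInner p₁ p₀ = 1 := by
    rw [← jInner_smul_smul, ← h₀, ← h₁, jInner_mulVec hM]; simp [jInner_apply]
  have h₂₀ : a₂ * conj a₀ * jInner p₂ p₀ = 1 := by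
    rw [← jInner_smul_smul, ← h₀, ← h₂, jInner_mulVec hM]; simp [jInner_apply]
  have h₂₁ : a₂ * conj a₁ * jInner p₂ p₁ = μ := by
    rw [← jInner_smul_smul, ← h₁, ← h₂, jInner_mulVec hM]; simp [jInner_apply]
  refine ⟨eq_mul_div_of_mul_eq_one_of_mul_eq h₀₁ h₂₁ hμ, ?_⟩
  simpa using eq_mul_div_of_mul_eq_one_of_mul_eq h₁₀ h₂₀ one_ne_zero

theorem eq_smul_mul_of_mulVec_eq_smul {r s : ℂ}
    (h₀ : M *ᵥ ![1, 0, 0] = a₀ • p₀) (h₁ : M *ᵥ ![0, 0, 1] = a₁ • p₁)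
    (h₂ : M *ᵥ ![μ, 1, 1] = a₂ • p₂) (hr : a₀ = a₂ * r) (hs : a₁ = a₂ * s) :
    M = a₂ • ((of ![r • p₀, p₂, s • p₁])ᵀ * !![1, -μ, 0; 0, 1, 0; 0, -1, 1]) := by
  have hP : (of ![![1, 0, 0], ![μ, 1, 1], ![0, 0, 1]])ᵀ * !![1, -μ, 0; 0, 1, 0; 0, -1, 1] = 1 := by
    ext i j
    fin_cases i <;> fin_cases j <;> simp [mul_apply, Fin.sum_univ_three]
  have hcols : (of fun j => M *ᵥ ![![1, 0, 0], ![μ, 1, 1], ![0, 0, 1]] j)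
      = a₂ • of ![r • p₀, p₂, s • p₁] := by
    ext j k
    fin_cases j <;> simp [h₀, h₁, h₂, hr, hs, mul_assoc]
  calc M = M * ((of ![![1, 0, 0], ![μ, 1, 1], ![0, 0, 1]])ᵀ * !![1, -μ, 0; 0, 1, 0; 0, -1, 1]) := by
        rw [hP, Matrix.mul_one]
    _ = _ := by rw [← Matrix.mul_assoc, mul_transpose_of, hcols, transpose_smul, Matrix.smul_mul]

theorem exists_eq_smul_of_mem_matrix (K : Subfield ℂ) (hM : inSU21 M) (hμ : μ ≠ 0) (hμK : μ ∈ K)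
    (hp₀ : ∀ i, p₀ i ∈ K) (hp₁ : ∀ i, p₁ i ∈ K) (hp₂ : ∀ i, p₂ i ∈ K)
    (hp₀' : ∀ i, conj (p₀ i) ∈ K) (hp₁' : ∀ i, conj (p₁ i) ∈ K)
    (h₀ : M *ᵥ ![1, 0, 0] = a₀ • p₀) (h₁ : M *ᵥ ![0, 0, 1] = a₁ • p₁)
    (h₂ : M *ᵥ ![μ, 1, 1] = a₂ • p₂) :
    ∃ c N, c ^ 3 ∈ K ∧ N ∈ K.toSubring.matrix ∧ M = c • N := by
  obtain ⟨hr, hs⟩ := coeffs_eq_of_mulVec_eq_smul hM.1 hμ h₀ h₁ h₂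
  have hrK : jInner p₂ p₁ / (μ * jInner p₀ p₁) ∈ K :=
    div_mem (jInner_mem hp₂ hp₁') (mul_mem hμK (jInner_mem hp₀ hp₁'))
  have hsK : jInner p₂ p₀ / jInner p₁ p₀ ∈ K := div_mem (jInner_mem hp₂ hp₀') (jInner_mem hp₁ hp₀')
  set Q := of ![(jInner p₂ p₁ / (μ * jInner p₀ p₁)) • p₀, p₂, (jInner p₂ p₀ / jInner p₁ p₀) • p₁]
  have hQ : ∀ i j, Q i j ∈ K := by
    intro i j
    fin_cases i
    · exact mul_mem hrK (hp₀ j)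
    · exact hp₂ j
    · exact mul_mem hsK (hp₁ j)
  have hMQ := eq_smul_mul_of_mulVec_eq_smul h₀ h₁ h₂ hr hs
  have hdet : a₂ ^ 3 * Q.det = 1 := by
    have hP : det !![1, -μ, 0; 0, 1, 0; 0, -1, 1] = 1 := by simp [det_fin_three]
    simpa [hMQ, det_smul, det_mul, hP] using hM.2
  refine ⟨a₂, _, ?_, mul_mem (fun i j => hQ j i) ?_, hMQ⟩
  · rw [eq_inv_of_mul_eq_one_left hdet]
    exact inv_mem (K.toSubring.det_mem_of_mem_matrix hQ)
  · intro i j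
    fin_cases i <;> fin_cases j <;> simp [hμK]

end Siegel

theorem cube_in_coordinate_field
    (M : Matrix (Fin 3) (Fin 3) ℂ) (hM : inSU21 M)
    (t : ℝ) (w₀₁ w₀₂ w₁₁ w₁₂ w₂₁ w₂₂ : ℂ)
    -- M sends ∞ (lift (1,0,0)) to p₀, 0 (lift (0,0,1)) to p₁,
    -- and (1,t) (lift ((-1+it)/2, 1, 1)) to p₂
    (h0 : ∃ a : ℂ, a ≠ 0 ∧ M.mulVec ![1, 0, 0] = a • ![w₀₁, w₀₂, 1])
    (h1 : ∃ a : ℂ, a ≠ 0 ∧ M.mulVec ![0, 0, 1] = a • ![w₁₁, w₁₂, 1])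
    (h2 : ∃ a : ℂ, a ≠ 0 ∧
      M.mulVec ![(-1 + t * I)/2, 1, 1] = a • ![w₂₁, w₂₂, 1]) :
    ∀ i j, (M ^ 3) i j ∈ Subfield.closure
      ({(t : ℂ) * I, w₀₁, w₀₂, w₁₁, w₁₂, w₂₁, w₂₂,
        (starRingEnd ℂ) w₀₁, (starRingEnd ℂ) w₀₂, (starRingEnd ℂ) w₁₁,
        (starRingEnd ℂ) w₁₂, (starRingEnd ℂ) w₂₁, (starRingEnd ℂ) w₂₂} : Set ℂ) := by
  obtain ⟨a₀, -, h₀⟩ := h0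
  obtain ⟨a₁, -, h₁⟩ := h1
  obtain ⟨a₂, -, h₂⟩ := h2
  set K := Subfield.closure
      ({(t : ℂ) * I, w₀₁, w₀₂, w₁₁, w₁₂, w₂₁, w₂₂,
        (starRingEnd ℂ) w₀₁, (starRingEnd ℂ) w₀₂, (starRingEnd ℂ) w₁₁,
        (starRingEnd ℂ) w₁₂, (starRingEnd ℂ) w₂₁, (starRingEnd ℂ) w₂₂} : Set ℂ)
  have hK : ∀ z ∈ ({(t : ℂ) * I, w₀₁, w₀₂, w₁₁, w₁₂, w₂₁, w₂₂,
      conj w₀₁, conj w₀₂, conj w₁₁, conj w₁₂, conj w₂₁, conj w₂₂} : Set ℂ), z ∈ K :=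
    fun z hz => Subfield.subset_closure hz
  have hμ : (-1 + t * I) / 2 ≠ 0 := by
    intro h
    simpa using congrArg re h
  have hμK : (-1 + t * I) / 2 ∈ K :=
    div_mem (add_mem (neg_mem (one_mem K)) (hK _ (by simp))) (ofNat_mem K 2)
  obtain ⟨c, N, hc, hN, rfl⟩ := exists_eq_smul_of_mem_matrix K hM hμ hμK
    (by simp [Fin.forall_fin_succ, hK]) (by simp [Fin.forall_fin_succ, hK])
    (by simp [Fin.forall_fin_succ, hK]) (by simp [Fin.forall_fin_succ, hK])
    (by simp [Fin.forall_fin_succ, hK]) h₀ h₁ h₂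
  intro i j
  rw [smul_pow, Matrix.smul_apply, smul_eq_mul]
  exact mul_mem hc (pow_mem hN 3 i j)
end

section
/- Let P = e^{iθ}·[[1,0,i/(2c)],[0,e^{-3iθ},0],[0,0,1]] with c = |ξ|^2, and define t(X) = (Tr(PX) − e^{iθ}Tr X)(e^{-2iθ} + e^{iθ}) − (Tr(P²X) − e^{2iθ}Tr X). Let L = [[0,0,1/(conj(λ)|ξ|²)],[0,−conj(λ)/λ, i/conj(λ)],[λ|ξ|², −i|ξ|²conj(λ)/λ, (−|ξ|²+iu)/(2conj(λ))]] ∈ SU(2,1). Then t(L) = −((e^{3iθ}−1)/(2e^{iθ}))·iλ. -/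
set_option maxHeartbeats 2000000

open Matrix Complex

theorem trace_functional_on_L (θ u : ℝ) (ξ lam : ℂ) (hξ : ξ ≠ 0) (hlam : lam ≠ 0)
    (P L : Matrix (Fin 3) (Fin 3) ℂ)
    (hP : P = Complex.exp (θ * I) •
      !![1, 0, I / (2 * (‖ξ‖ : ℂ)^2);
         0, Complex.exp (-(3*θ) * I), 0;
         0, 0, 1])
    (hL : L = !![0, 0, 1 / ((starRingEnd ℂ) lam * (‖ξ‖ : ℂ)^2);
         0, -((starRingEnd ℂ) lam) / lam, I / (starRingEnd ℂ) lam;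
         lam * (‖ξ‖ : ℂ)^2,
           -I * (‖ξ‖ : ℂ)^2 * (starRingEnd ℂ) lam / lam,
           (-(‖ξ‖ : ℂ)^2 + u * I) / (2 * (starRingEnd ℂ) lam)])
    (tfun : Matrix (Fin 3) (Fin 3) ℂ → ℂ)
    (htfun : ∀ X, tfun X =
      ((P * X).trace - Complex.exp (θ * I) * X.trace)
          * (Complex.exp (-(2*θ) * I) + Complex.exp (θ * I))
        - ((P ^ 2 * X).trace - Complex.exp ((2*θ) * I) * X.trace)) :
    tfun L = -((Complex.exp ((3*θ) * I) - 1) / (2 * Complex.exp (θ * I))) * (I * lam) := by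
  have hc : ((‖ξ‖ : ℂ))^2 ≠ 0 := by simp [hξ]
  have hlc : (starRingEnd ℂ) lam ≠ 0 := by simp [hlam]
  have he : Complex.exp ((θ:ℂ) * I) ≠ 0 := Complex.exp_ne_zero _
  set E := Complex.exp ((θ:ℂ) * I) with hE
  set A := Complex.exp ((-(2*θ):ℂ) * I) with hAdef
  set m := (starRingEnd ℂ) lam with hm
  set a := ((‖ξ‖ : ℂ))^2 with ha
  -- key exponential relations
  have hA : E ^ 2 * A = 1 := by
    rw [hE, hAdef, pow_two, ← Complex.exp_add, ← Complex.exp_add, ← Complex.exp_zero]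
    congr 1
    push_cast
    ring
  have hA3 : E * Complex.exp ((-(3*θ):ℂ) * I) = A := by
    rw [hE, hAdef, ← Complex.exp_add]
    congr 1
    push_cast
    ring
  have h3 : Complex.exp (((3*θ):ℂ) * I) = E ^ 3 := by
    rw [hE, ← Complex.exp_nat_mul]
    congr 1
    push_cast
    ring
  have h2 : Complex.exp (((2*θ):ℂ) * I) = E ^ 2 := by
    rw [hE, ← Complex.exp_nat_mul]
    congr 1
    push_cast
    ring
  -- the three traces
  have h0 : L.trace = -m/lam + (-a + u*I)/(2*m) := by
    rw [hL, Matrix.trace_fin_three]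
    simp
  have h1 : (P * L).trace = E*I*lam/2 + A*(-m/lam) + E*((-a + u*I)/(2*m)) := by
    rw [hP, hL, Matrix.trace_fin_three]
    simp only [Matrix.mul_apply, Fin.sum_univ_three, Matrix.smul_apply, smul_eq_mul,
      Matrix.cons_val', Matrix.cons_val_zero, Matrix.cons_val_one, Matrix.head_cons,
      Matrix.empty_val', Matrix.cons_val_fin_one, Matrix.cons_val_two, Matrix.tail_cons,
      Matrix.head_fin_const, Matrix.vecHead, Matrix.vecTail, Function.comp_apply]
    rw [← hA3]
    rw [← sub_eq_zero]
    field_simp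
    ring_nf
    simp [Matrix.vecHead, Matrix.vecTail]
    try ring
    try (rw [← sub_eq_zero]; field_simp; ring_nf)
  have h2L : (P ^ 2 * L).trace =
      E^2*I*lam + A^2*(-m/lam) + E^2*((-a + u*I)/(2*m)) := by
    rw [pow_two, hP, hL, Matrix.trace_fin_three]
    simp only [Matrix.mul_apply, Fin.sum_univ_three, Matrix.smul_apply, smul_eq_mul,
      Matrix.cons_val', Matrix.cons_val_zero, Matrix.cons_val_one, Matrix.head_cons,
      Matrix.empty_val', Matrix.cons_val_fin_one, Matrix.cons_val_two, Matrix.tail_cons,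
      Matrix.head_fin_const, Matrix.vecHead, Matrix.vecTail, Function.comp_apply]
    rw [← hA3]
    rw [← sub_eq_zero]
    field_simp
    ring_nf
    simp [Matrix.vecHead, Matrix.vecTail]
    try ring
    have hG : lam * (‖ξ‖ : ℂ)^6 * m^2 *
        (lam⁻¹ * ((‖ξ‖ : ℂ))⁻¹^6 * m⁻¹^2) = 1 := by
      have hK : lam * (‖ξ‖ : ℂ)^6 * m^2 ≠ 0 := by simp [hlam, hlc, hξ]
      have hK' : (‖ξ‖ : ℂ) ≠ 0 := by simp [hξ]
      field_simp
    have hK' : (‖ξ‖ : ℂ) ≠ 0 := by simp [hξ]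
    field_simp
    ring
  rw [htfun, h0, h1, h2L, h3, h2]
  rw [← sub_eq_zero]
  field_simp
  ring_nf
  have hG2 : lam^3 * m^3 * (lam⁻¹^3 * m⁻¹^3) = 1 := by
    have hK : lam^3 * m^3 ≠ 0 := by simp [hlam, hlc]
    field_simp
  rw [eq_inv_of_mul_eq_one_right hA]
  field_simp
  ring
end

section
/- Let H be a Hermitian matrix of signature (n,1) with entries in a number field E, and let g ∈ SU(H) be loxodromic with eigenvalue λ, |λ| > 1. If a field embedding τ: E → ℂ satisfies τ(Tr(g^m)) = Tr(g^m) for all m and the group SU(^τH) is compact, then a contradiction arises; hence no such τ other than identity or complex conjugation can fix the trace field of a group containing g and contained in SU(H, O_E) with (H, E/F) admissible. -/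
/-!
The traces `Tr(g^m)` grow like `|λ|^m`, because the other eigenvalues of `g` have modulus at most
one. Applying `τ` entrywise carries `g^m` into `SU(^τH)` without changing its trace, since `τ` fixes
the traces; but the trace is continuous, hence bounded on the compact group `SU(^τH)`.
-/

open Matrix Complex Filter

namespace Matrix

variable {ι R : Type*} [Fintype ι] [DecidableEq ι]

def specialUnitarySubmonoid [CommRing R] [StarRing R] (J : Matrix ι ι R) :
    Submonoid (Matrix ι ι R) where
  carrier := {A | Aᴴ * J * A = J ∧ A.det = 1}
  mul_mem' {A B} hA hB := by
    refine ⟨?_, by rw [det_mul, hA.2, hB.2, one_mul]⟩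
    calc (A * B)ᴴ * J * (A * B) = Bᴴ * (Aᴴ * J * A) * B := by
          simp only [conjTranspose_mul, Matrix.mul_assoc]
      _ = J := by rw [hA.1, hB.1]
  one_mem' := by simp

theorem exists_norm_trace_pow_le_of_isCompact [SeminormedRing R] {S : Submonoid (Matrix ι ι R)}
    (hS : IsCompact (S : Set (Matrix ι ι R))) {A : Matrix ι ι R} (hA : A ∈ S) :
    ∃ C, ∀ m : ℕ, ‖(A ^ m).trace‖ ≤ C := by
  obtain ⟨C, hC⟩ := (hS.image continuous_id.matrix_trace).isBounded.exists_norm_le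
  exact ⟨C, fun m => hC _ ⟨A ^ m, S.pow_mem hA m, rfl⟩⟩

theorem trace_map_pow {S : Type*} [Semiring R] [Semiring S] (f : R →+* S) (A : Matrix ι ι R)
    (m : ℕ) : ((A.map f) ^ m).trace = f ((A ^ m).trace) := by
  rw [AddMonoidHom.map_trace f, Matrix.map_pow]

end Matrix

theorem Complex.norm_sum_exp_ofReal_mul_I_le {α : Type*} (s : Finset α) (φ : α → ℝ) :
    ‖∑ j ∈ s, exp (φ j * I)‖ ≤ s.card := by
  calc ‖∑ j ∈ s, exp (φ j * I)‖ ≤ ∑ j ∈ s, ‖exp (φ j * I)‖ := norm_sum_le _ _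
    _ = s.card := by simp only [norm_exp_ofReal_mul_I, Finset.sum_const, nsmul_one]

theorem Complex.pow_norm_sub_le_norm_loxodromic_trace {k : ℕ} (θ : Fin k → ℝ) {lam : ℂ}
    (hlam : 1 ≤ ‖lam‖) (m : ℕ) :
    ‖lam‖ ^ m - 1 - k ≤
      ‖lam ^ m + ((starRingEnd ℂ) lam)⁻¹ ^ m + ∑ j, exp ((m : ℂ) * θ j * I)‖ := by
  set rot := ∑ j, exp ((m : ℂ) * θ j * I)
  have hrot : ‖rot‖ ≤ k := by
    simpa only [rot, ← ofReal_natCast, ← ofReal_mul, Finset.card_univ, Fintype.card_fin] using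
      norm_sum_exp_ofReal_mul_I_le Finset.univ (fun j => m * θ j)
  have hinv : ‖((starRingEnd ℂ) lam)⁻¹ ^ m‖ ≤ 1 := by
    rw [norm_pow, norm_inv, norm_conj]
    exact pow_le_one₀ (by positivity) (inv_le_one_of_one_le₀ hlam)
  have htri := norm_add₃_le (a := lam ^ m + ((starRingEnd ℂ) lam)⁻¹ ^ m + rot)
    (b := -((starRingEnd ℂ) lam)⁻¹ ^ m) (c := -rot)
  rw [show lam ^ m + ((starRingEnd ℂ) lam)⁻¹ ^ m + rot + -((starRingEnd ℂ) lam)⁻¹ ^ m + -rot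
      = lam ^ m by ring, norm_neg, norm_neg, norm_pow] at htri
  linarith

theorem Complex.tendsto_norm_loxodromic_trace {k : ℕ} (θ : Fin k → ℝ) {lam : ℂ}
    (hlam : 1 < ‖lam‖) :
    Tendsto (fun m : ℕ => ‖lam ^ m + ((starRingEnd ℂ) lam)⁻¹ ^ m
      + ∑ j, exp ((m : ℂ) * θ j * I)‖) atTop atTop :=
  tendsto_atTop_mono (pow_norm_sub_le_norm_loxodromic_trace θ hlam.le)
    (tendsto_atTop_add_const_right _ _
      (tendsto_atTop_add_const_right _ _ (tendsto_pow_atTop_atTop_of_one_lt hlam)))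

theorem no_trace_fixing_compact_embedding_general (n k : ℕ)
    (E : Subfield ℂ)
    -- H is Hermitian with entries in E, g ∈ SU(H) with entries in E
    (HE gE : Matrix (Fin (n+1)) (Fin (n+1)) E)
    (g : Matrix (Fin (n+1)) (Fin (n+1)) ℂ)
    -- g is loxodromic with leading eigenvalue lam, |lam| > 1
    (lam : ℂ) (hlam : 1 < ‖lam‖)
    (θ : Fin k → ℝ)
    (htr : ∀ m : ℕ, (g ^ m).trace
      = lam ^ m + ((starRingEnd ℂ) lam)⁻¹ ^ m
        + ∑ j, Complex.exp ((m : ℂ) * θ j * I))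
    -- τ is a field embedding of E fixing all the traces Tr(g^m)
    (τ : E →+* ℂ)
    (hτfix : ∀ m : ℕ, τ ((gE ^ m).trace) = (g ^ m).trace)
    -- applying τ entrywise sends g into SU(^τH) ...
    (hgτ : gE.map (fun x => τ x) ∈
      {A : Matrix (Fin (n+1)) (Fin (n+1)) ℂ |
        Aᴴ * HE.map (fun x => τ x) * A = HE.map (fun x => τ x) ∧ A.det = 1})
    -- ... and SU(^τH) is compact
    (hcpt : IsCompact {A : Matrix (Fin (n+1)) (Fin (n+1)) ℂ |
        Aᴴ * HE.map (fun x => τ x) * A = HE.map (fun x => τ x) ∧ A.det = 1}) :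
    False := by
  have hcompact : IsCompact
      (specialUnitarySubmonoid (HE.map fun x => τ x) : Set (Matrix (Fin (n+1)) (Fin (n+1)) ℂ)) :=
    hcpt
  obtain ⟨C, hC⟩ := exists_norm_trace_pow_le_of_isCompact hcompact hgτ
  obtain ⟨m, hm⟩ := ((tendsto_norm_loxodromic_trace θ hlam).eventually_gt_atTop C).exists
  have hbdd : ‖(g ^ m).trace‖ ≤ C := by
    simpa only [trace_map_pow, hτfix] using hC m
  exact hbdd.not_gt (htr m ▸ hm)

theorem no_trace_fixing_compact_embedding (n k : ℕ)
    (E : Subfield ℂ)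
    -- H is Hermitian with entries in E, g ∈ SU(H) with entries in E
    (HE gE : Matrix (Fin (n+1)) (Fin (n+1)) E)
    (H g : Matrix (Fin (n+1)) (Fin (n+1)) ℂ)
    (hH : H = HE.map (fun x => (x : ℂ))) (hg : g = gE.map (fun x => (x : ℂ)))
    (hHerm : Hᴴ = H)
    (hSU : gᴴ * H * g = H ∧ g.det = 1)
    -- g is loxodromic with leading eigenvalue lam, |lam| > 1
    (lam : ℂ) (hlam : 1 < ‖lam‖)
    (v : Fin (n+1) → ℂ) (hv : v ≠ 0) (heig : g.mulVec v = lam • v)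
    (θ : Fin k → ℝ)
    (htr : ∀ m : ℕ, (g ^ m).trace
      = lam ^ m + ((starRingEnd ℂ) lam)⁻¹ ^ m
        + ∑ j, Complex.exp ((m : ℂ) * θ j * I))
    -- τ is a field embedding of E fixing all the traces Tr(g^m)
    (τ : E →+* ℂ)
    (hτfix : ∀ m : ℕ, τ ((gE ^ m).trace) = (g ^ m).trace)
    -- applying τ entrywise sends g into SU(^τH) ...
    (hgτ : gE.map (fun x => τ x) ∈
      {A : Matrix (Fin (n+1)) (Fin (n+1)) ℂ |
        Aᴴ * HE.map (fun x => τ x) * A = HE.map (fun x => τ x) ∧ A.det = 1})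
    -- ... and SU(^τH) is compact
    (hcpt : IsCompact {A : Matrix (Fin (n+1)) (Fin (n+1)) ℂ |
        Aᴴ * HE.map (fun x => τ x) * A = HE.map (fun x => τ x) ∧ A.det = 1}) :
    False :=
  no_trace_fixing_compact_embedding_general n k E HE gE g lam hlam θ htr τ hτfix hgτ hcpt
end
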